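/- For every A ∈ ℝ^{n×n}, z ∈ ℝ^n, and u, v ∈ ℝ^r: (Pu)ᵀ A (Pv) = n²·uᵀ Q Ā Q v and zᵀ P u = n·z̄ᵀ Q u, where Ā_{bc} = (1/(n_b n_c))·∑_{i: τ(i)=b} ∑_{j: τ(j)=c} A_{ij} and z̄_b = (1/n_b)·∑_{i: τ(i)=b} z_i. Moreover, let N ∈ ℝ^{r×r} be symmetric positive semidefinite, θ ∈ (0,1)^r, ε ∈ {−1,+1}^r, y_i = ε_{τ(i)}, Y = diag(y), Y_r = diag(ε), M = P N Pᵀ, and J = (1/n)·diag(φ''(θ_{τ(1)}), …, φ''(θ_{τ(n)})) + (1/(λn²))·Y M Y. Then the block-constant subspace {Pu : u ∈ ℝ^r} and its orthogonal complement are both invariant under J, J(Pu) = (1/n)·P·A_λ·u where A_λ = diag(φ''(θ_1), …, φ''(θ_r)) + (1/λ)·Y_r N Q Y_r, the matrix A_λ is invertible, and J^{−1}(Pz') = n·P·A_λ^{−1}·z' for every z' ∈ ℝ^r. -/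

import Mathlib

/-!
Write `P` for the membership matrix, so that `P u = u ∘ τ`. Then `Pᵀ A P` is the matrix of block
sums of `A`, i.e. `n² Q Ā Q`, and `Pᵀ P = n Q`; since moreover `diag(y) P = P Y_r`, one gets the
matrix identity `J P = (1/n) P A_λ`. `J` is a positive diagonal plus a positive semidefinite Gram
term `(Y P) N (Y P)ᵀ`, hence positive definite: it is symmetric, which makes the orthogonal
complement of `range P` invariant, and invertible. As `P` is injective (`τ` is onto),
`A_λ u = 0` forces `J (P u) = 0`, so `u = 0` and `A_λ` is invertible; finally
`J⁻¹ P = n P A_λ⁻¹` follows from `J P = (1/n) P A_λ` by multiplying with `J⁻¹` and `A_λ⁻¹`.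
-/

open Matrix Set Finset

/-- Second derivative of the binary entropy potential on `(0,1)`:
`φ''(c) = 1/c + 1/(1−c)`. -/
noncomputable def phiEnt'' (c : ℝ) : ℝ := 1 / c + 1 / (1 - c)

/-- Size of the template block `b` under the assignment `τ`. -/
def blockSize {n r : ℕ} (τ : Fin n → Fin r) (b : Fin r) : ℕ :=
  (univ.filter (fun i => τ i = b)).card

/-- Color-pair block averages `Ā_{bc} = (1/(n_b n_c))·∑_{τ(i)=b} ∑_{τ(j)=c} A_{ij}`. -/
noncomputable def blockAvgM {n r : ℕ} (τ : Fin n → Fin r)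
    (A : Matrix (Fin n) (Fin n) ℝ) : Matrix (Fin r) (Fin r) ℝ :=
  Matrix.of fun b c =>
    (1 / ((blockSize τ b : ℝ) * (blockSize τ c : ℝ))) *
      ∑ i ∈ univ.filter (fun i => τ i = b), ∑ j ∈ univ.filter (fun j => τ j = c), A i j

/-- Block averages `z̄_b = (1/n_b)·∑_{τ(i)=b} z_i` of a vector. -/
noncomputable def blockAvgV {n r : ℕ} (τ : Fin n → Fin r) (z : Fin n → ℝ) :
    Fin r → ℝ :=
  fun b => (1 / (blockSize τ b : ℝ)) * ∑ i ∈ univ.filter (fun i => τ i = b), z i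


namespace Matrix

section Membership

variable {ι κ R : Type*} [DecidableEq κ]

def membershipMatrix (R : Type*) [Zero R] [One R] (τ : ι → κ) : Matrix ι κ R :=
  of fun i b => if τ i = b then 1 else 0

variable [CommSemiring R] (τ : ι → κ)

theorem membershipMatrix_mulVec [Fintype κ] (u : κ → R) :
    membershipMatrix R τ *ᵥ u = u ∘ τ := by
  ext i
  simp [membershipMatrix, mulVec, dotProduct, ite_mul]

theorem vecMul_membershipMatrix [Fintype ι] (z : ι → R) :
    z ᵥ* membershipMatrix R τ = fun b => ∑ i with τ i = b, z i := by
  ext b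
  simp [membershipMatrix, vecMul, dotProduct, Finset.sum_filter]

theorem membershipMatrix_transpose_mul_mul [Fintype ι] (A : Matrix ι ι R) :
    (membershipMatrix R τ)ᵀ * A * membershipMatrix R τ =
      of fun b c => ∑ i with τ i = b, ∑ j with τ j = c, A i j := by
  ext b c
  simp only [mul_apply, transpose_apply, Finset.sum_mul, of_apply, Finset.sum_filter]
  rw [Finset.sum_comm]
  refine Finset.sum_congr rfl fun i _ => ?_
  split_ifs with hi <;> simp [membershipMatrix, hi]

theorem membershipMatrix_transpose_mul_self [Fintype ι] :
    (membershipMatrix R τ)ᵀ * membershipMatrix R τ = diagonal fun b => (#{i | τ i = b} : R) := by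
  ext b c
  by_cases h : b = c
  · subst h
    simp [membershipMatrix, mul_apply, Finset.sum_ite, Finset.filter_filter]
  · have hbc : ∀ i, ¬(τ i = c ∧ τ i = b) := fun i hi => h (hi.2.symm.trans hi.1)
    simp [membershipMatrix, mul_apply, h, ← ite_and, hbc]

theorem diagonal_comp_mul_membershipMatrix [Fintype ι] [DecidableEq ι] [Fintype κ] (d : κ → R) :
    diagonal (fun i => d (τ i)) * membershipMatrix R τ = membershipMatrix R τ * diagonal d := by
  ext i b
  by_cases h : τ i = b <;> simp [membershipMatrix, h]

end Membership

section Intertwining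

variable {ι κ K : Type*} [Fintype ι] [Fintype κ] [DecidableEq ι] [DecidableEq κ] [Field K]
  {J : Matrix ι ι K} {P : Matrix ι κ K} {A : Matrix κ κ K} {c : K}

theorem isUnit_det_of_mul_eq_smul_mul (hJ : IsUnit J.det) (hP : Function.Injective P.mulVec)
    (h : J * P = c • (P * A)) : IsUnit A.det := by
  rw [← isUnit_iff_isUnit_det, ← mulVec_injective_iff_isUnit]
  intro u v huv
  apply hP
  apply mulVec_injective_iff_isUnit.2 ((isUnit_iff_isUnit_det J).2 hJ)
  rw [mulVec_mulVec, mulVec_mulVec, h, smul_mulVec, smul_mulVec, ← mulVec_mulVec,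
    ← mulVec_mulVec, huv]

theorem inv_mul_eq_of_mul_eq_smul_mul (hJ : IsUnit J.det) (hA : IsUnit A.det) (hc : c ≠ 0)
    (h : J * P = c • (P * A)) : J⁻¹ * P = c⁻¹ • (P * A⁻¹) :=
  calc J⁻¹ * P = J⁻¹ * (P * A) * A⁻¹ := by
        rw [Matrix.mul_assoc, Matrix.mul_assoc, mul_nonsing_inv _ hA, Matrix.mul_one]
    _ = J⁻¹ * (c⁻¹ • (J * P)) * A⁻¹ := by rw [h, smul_smul, inv_mul_cancel₀ hc, one_smul]
    _ = c⁻¹ • (P * A⁻¹) := by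
        rw [Matrix.mul_smul, ← Matrix.mul_assoc, nonsing_inv_mul _ hJ, Matrix.one_mul,
          Matrix.smul_mul]

end Intertwining

theorem posDef_diagonal_add_smul_mul_mul_transpose {ι κ : Type*} [Fintype ι] [Fintype κ]
    [DecidableEq ι] {d : ι → ℝ} (hd : ∀ i, 0 < d i) {c : ℝ} (hc : 0 ≤ c)
    {N : Matrix κ κ ℝ} (hN : N.PosSemidef) (B : Matrix ι κ ℝ) :
    (diagonal d + c • (B * N * Bᵀ)).PosDef := by
  refine (PosDef.diagonal hd).add_posSemidef (PosSemidef.smul ?_ hc)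
  simpa [conjTranspose_eq_transpose_of_trivial] using hN.mul_mul_conjTranspose_same B

end Matrix

theorem phiEnt''_pos {c : ℝ} (hc : c ∈ Ioo (0 : ℝ) 1) : 0 < phiEnt'' c := by
  obtain ⟨hc0, hc1⟩ := hc
  have : 0 < 1 - c := sub_pos.2 hc1
  unfold phiEnt''
  positivity

section Blocks

variable {n r : ℕ} (τ : Fin n → Fin r)

noncomputable def blockWeights : Fin r → ℝ := fun b => blockSize τ b / n

theorem blockSize_pos (hτ : Function.Surjective τ) (b : Fin r) : 0 < blockSize τ b := by
  obtain ⟨i, hi⟩ := hτ b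
  exact Finset.card_pos.2 ⟨i, by simp [hi]⟩

theorem membershipMatrix_transpose_mul_mul_eq_blockAvgM (hτ : Function.Surjective τ)
    (A : Matrix (Fin n) (Fin n) ℝ) :
    (membershipMatrix ℝ τ)ᵀ * A * membershipMatrix ℝ τ =
      (n : ℝ) ^ 2 • (diagonal (blockWeights τ) * blockAvgM τ A * diagonal (blockWeights τ)) := by
  rw [membershipMatrix_transpose_mul_mul]
  ext b c
  have hb : (blockSize τ b : ℝ) ≠ 0 := by exact_mod_cast (blockSize_pos τ hτ b).ne'
  have hc : (blockSize τ c : ℝ) ≠ 0 := by exact_mod_cast (blockSize_pos τ hτ c).ne'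
  have hn : (n : ℝ) ≠ 0 := by exact_mod_cast (Fin.pos (hτ b).choose).ne'
  simp only [of_apply, Matrix.smul_apply, diagonal_mul, mul_diagonal, blockAvgM, blockWeights,
    smul_eq_mul]
  field_simp

theorem vecMul_membershipMatrix_eq_blockAvgV (hτ : Function.Surjective τ) (z : Fin n → ℝ) :
    z ᵥ* membershipMatrix ℝ τ = (n : ℝ) • (blockAvgV τ z ᵥ* diagonal (blockWeights τ)) := by
  ext b
  rw [vecMul_membershipMatrix, Pi.smul_apply, vecMul_diagonal]
  have hb : (blockSize τ b : ℝ) ≠ 0 := by exact_mod_cast (blockSize_pos τ hτ b).ne'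
  have hn : (n : ℝ) ≠ 0 := by exact_mod_cast (Fin.pos (hτ b).choose).ne'
  simp only [blockAvgV, blockWeights, smul_eq_mul]
  field_simp

theorem membershipMatrix_mulVec_dotProduct_mulVec (hτ : Function.Surjective τ)
    (A : Matrix (Fin n) (Fin n) ℝ) (u v : Fin r → ℝ) :
    (membershipMatrix ℝ τ *ᵥ u) ⬝ᵥ (A *ᵥ (membershipMatrix ℝ τ *ᵥ v)) =
      (n : ℝ) ^ 2 * (u ⬝ᵥ (diagonal (blockWeights τ) *ᵥ
        (blockAvgM τ A *ᵥ (diagonal (blockWeights τ) *ᵥ v)))) := by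
  rw [← vecMul_transpose, ← dotProduct_mulVec, mulVec_mulVec, mulVec_mulVec,
    membershipMatrix_transpose_mul_mul_eq_blockAvgM τ hτ, smul_mulVec,
    dotProduct_smul, smul_eq_mul, ← mulVec_mulVec, ← mulVec_mulVec]

theorem dotProduct_membershipMatrix_mulVec (hτ : Function.Surjective τ) (z : Fin n → ℝ)
    (u : Fin r → ℝ) :
    z ⬝ᵥ (membershipMatrix ℝ τ *ᵥ u) =
      (n : ℝ) * (blockAvgV τ z ⬝ᵥ (diagonal (blockWeights τ) *ᵥ u)) := by
  rw [dotProduct_mulVec, vecMul_membershipMatrix_eq_blockAvgV τ hτ, smul_dotProduct,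
    smul_eq_mul, ← dotProduct_mulVec]

end Blocks

section Hessian

variable {n r : ℕ} (τ : Fin n → Fin r) (lam : ℝ) (d ε : Fin r → ℝ) (N : Matrix (Fin r) (Fin r) ℝ)

/-- The matrices `J` and `A_λ` of the statement, with `d b` in place of `φ''(θ_b)`. -/
noncomputable def dualHessian : Matrix (Fin n) (Fin n) ℝ :=
  ((1 : ℝ) / n) • diagonal (fun i => d (τ i)) +
    (1 / (lam * (n : ℝ) ^ 2)) • (diagonal (fun i => ε (τ i)) *
      (membershipMatrix ℝ τ * N * (membershipMatrix ℝ τ)ᵀ) * diagonal (fun i => ε (τ i)))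

noncomputable def reducedDualHessian : Matrix (Fin r) (Fin r) ℝ :=
  diagonal d + (1 / lam) • (diagonal ε * N * diagonal (blockWeights τ) * diagonal ε)

theorem membershipMatrix_transpose_mul_self_eq_blockWeights (hn : n ≠ 0) :
    (membershipMatrix ℝ τ)ᵀ * membershipMatrix ℝ τ = (n : ℝ) • diagonal (blockWeights τ) := by
  rw [membershipMatrix_transpose_mul_self, ← diagonal_smul]
  congr 1
  ext b
  have hn' : (n : ℝ) ≠ 0 := Nat.cast_ne_zero.2 hn
  simp only [blockWeights, blockSize, Pi.smul_apply, smul_eq_mul]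
  field_simp

theorem dualHessian_mul_membershipMatrix (hn : n ≠ 0) :
    dualHessian τ lam d ε N * membershipMatrix ℝ τ =
      ((1 : ℝ) / n) • (membershipMatrix ℝ τ * reducedDualHessian τ lam d ε N) := by
  set P := membershipMatrix ℝ τ
  have hYP : diagonal (fun i => ε (τ i)) * P = P * diagonal ε :=
    diagonal_comp_mul_membershipMatrix τ ε
  calc dualHessian τ lam d ε N * P
      = ((1 : ℝ) / n) • (diagonal (fun i => d (τ i)) * P) + (1 / (lam * (n : ℝ) ^ 2)) •
          (diagonal (fun i => ε (τ i)) * P * N * (Pᵀ * (diagonal (fun i => ε (τ i)) * P))) := by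
        simp only [dualHessian, Matrix.add_mul, Matrix.smul_mul, Matrix.mul_assoc]
        rfl
    _ = ((1 : ℝ) / n) • (P * diagonal d) + (1 / (lam * (n : ℝ) ^ 2)) •
          (P * diagonal ε * N * ((n : ℝ) • diagonal (blockWeights τ) * diagonal ε)) := by
        rw [hYP, diagonal_comp_mul_membershipMatrix, ← Matrix.mul_assoc Pᵀ,
          membershipMatrix_transpose_mul_self_eq_blockWeights τ hn]
    _ = ((1 : ℝ) / n) • (P * reducedDualHessian τ lam d ε N) := by
        have hn' : (n : ℝ) ≠ 0 := Nat.cast_ne_zero.2 hn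
        simp only [reducedDualHessian, Matrix.mul_add, Matrix.mul_smul, Matrix.smul_mul,
          smul_add, smul_smul, Matrix.mul_assoc]
        congr 2
        field_simp

theorem dualHessian_posDef (hlam : 0 < lam) (hd : ∀ b, 0 < d b) (hN : N.PosSemidef) :
    (dualHessian τ lam d ε N).PosDef := by
  have hY : diagonal (fun i => ε (τ i)) * (membershipMatrix ℝ τ * N * (membershipMatrix ℝ τ)ᵀ) *
      diagonal (fun i => ε (τ i)) = (diagonal (fun i => ε (τ i)) * membershipMatrix ℝ τ) * N *
        (diagonal (fun i => ε (τ i)) * membershipMatrix ℝ τ)ᵀ := by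
    simp only [transpose_mul, diagonal_transpose, Matrix.mul_assoc]
  rw [dualHessian, ← diagonal_smul, hY]
  refine posDef_diagonal_add_smul_mul_mul_transpose (fun i => ?_) (by positivity) hN _
  have hn : (0 : ℝ) < n := Nat.cast_pos.2 i.pos
  simpa using mul_pos (one_div_pos.2 hn) (hd (τ i))

theorem isUnit_det_reducedDualHessian (hn : n ≠ 0) (hτ : Function.Surjective τ)
    (hlam : 0 < lam) (hd : ∀ b, 0 < d b) (hN : N.PosSemidef) :
    IsUnit (reducedDualHessian τ lam d ε N).det := by
  refine isUnit_det_of_mul_eq_smul_mul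
    (dualHessian_posDef τ lam d ε N hlam hd hN).det_pos.ne'.isUnit ?_
    (dualHessian_mul_membershipMatrix τ lam d ε N hn)
  intro u v huv
  rw [membershipMatrix_mulVec, membershipMatrix_mulVec] at huv
  exact hτ.injective_comp_right huv

end Hessian

theorem block_projection_hessian
    {n r : ℕ} (hn : 0 < n) (lam : ℝ) (hlam : 0 < lam)
    (τ : Fin n → Fin r) (hτ : Function.Surjective τ)
    (P : Matrix (Fin n) (Fin r) ℝ)
    (hP : ∀ i b, P i b = if τ i = b then 1 else 0)
    (phat : Fin r → ℝ) (hphat : ∀ b, phat b = (blockSize τ b : ℝ) / n)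
    (Q : Matrix (Fin r) (Fin r) ℝ) (hQ : Q = Matrix.diagonal phat)
    (N : Matrix (Fin r) (Fin r) ℝ) (hN : N.PosSemidef)
    (θ : Fin r → ℝ) (hθ : ∀ b, θ b ∈ Ioo (0:ℝ) 1)
    (ε : Fin r → ℝ)
    (y : Fin n → ℝ) (hy : ∀ i, y i = ε (τ i))
    (Y : Matrix (Fin n) (Fin n) ℝ) (hY : Y = Matrix.diagonal y)
    (Yr : Matrix (Fin r) (Fin r) ℝ) (hYr : Yr = Matrix.diagonal ε)
    (M : Matrix (Fin n) (Fin n) ℝ) (hM : M = P * N * Pᵀ)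
    (J : Matrix (Fin n) (Fin n) ℝ)
    (hJ : J = ((1 : ℝ) / n) • Matrix.diagonal (fun i => phiEnt'' (θ (τ i))) +
      (1 / (lam * (n : ℝ) ^ 2)) • (Y * M * Y))
    (Alam : Matrix (Fin r) (Fin r) ℝ)
    (hAlam : Alam = Matrix.diagonal (fun b => phiEnt'' (θ b)) +
      (1 / lam) • (Yr * N * Q * Yr)) :
    (∀ (A : Matrix (Fin n) (Fin n) ℝ) (z : Fin n → ℝ) (u v : Fin r → ℝ),
      (P *ᵥ u) ⬝ᵥ (A *ᵥ (P *ᵥ v)) =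
        (n : ℝ) ^ 2 * (u ⬝ᵥ (Q *ᵥ (blockAvgM τ A *ᵥ (Q *ᵥ v)))) ∧
      z ⬝ᵥ (P *ᵥ u) = (n : ℝ) * (blockAvgV τ z ⬝ᵥ (Q *ᵥ u))) ∧
    (∀ u : Fin r → ℝ, ∃ w : Fin r → ℝ, J *ᵥ (P *ᵥ u) = P *ᵥ w) ∧
    (∀ x : Fin n → ℝ, (∀ u : Fin r → ℝ, x ⬝ᵥ (P *ᵥ u) = 0) →
      ∀ u : Fin r → ℝ, (J *ᵥ x) ⬝ᵥ (P *ᵥ u) = 0) ∧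
    (∀ u : Fin r → ℝ, J *ᵥ (P *ᵥ u) = ((1 : ℝ) / n) • (P *ᵥ (Alam *ᵥ u))) ∧
    IsUnit Alam.det ∧
    (∀ z' : Fin r → ℝ, J⁻¹ *ᵥ (P *ᵥ z') = (n : ℝ) • (P *ᵥ (Alam⁻¹ *ᵥ z'))) := by
  obtain rfl : P = membershipMatrix ℝ τ := Matrix.ext hP
  obtain rfl : phat = blockWeights τ := funext hphat
  obtain rfl : y = fun i => ε (τ i) := funext hy
  subst hQ hY hYr hM
  set d := fun b => phiEnt'' (θ b)
  replace hJ : J = dualHessian τ lam d ε N := hJ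
  replace hAlam : Alam = reducedDualHessian τ lam d ε N := hAlam
  have hd : ∀ b, 0 < d b := fun b => phiEnt''_pos (hθ b)
  have hJ_posDef : J.PosDef := hJ ▸ dualHessian_posDef τ lam d ε N hlam hd hN
  have hJP : J * membershipMatrix ℝ τ = ((1 : ℝ) / n) • (membershipMatrix ℝ τ * Alam) :=
    hJ ▸ hAlam ▸ dualHessian_mul_membershipMatrix τ lam d ε N hn.ne'
  have hAlam_det : IsUnit Alam.det :=
    hAlam ▸ isUnit_det_reducedDualHessian τ lam d ε N hn.ne' hτ hlam hd hN
  have hJPu : ∀ u, J *ᵥ (membershipMatrix ℝ τ *ᵥ u) =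
      ((1 : ℝ) / n) • (membershipMatrix ℝ τ *ᵥ (Alam *ᵥ u)) := fun u => by
    rw [mulVec_mulVec, hJP, smul_mulVec, mulVec_mulVec]
  refine ⟨fun A z u v => ⟨membershipMatrix_mulVec_dotProduct_mulVec τ hτ A u v,
      dotProduct_membershipMatrix_mulVec τ hτ z u⟩,
    fun u => ⟨_, (hJPu u).trans (mulVec_smul _ _ _).symm⟩, ?_, hJPu, hAlam_det, fun z' => ?_⟩
  · intro x hx u
    have hJ_symm := (isHermitian_iff_isSymm.1 hJ_posDef.isHermitian).eq
    rw [dotProduct_comm, ← dotProduct_transpose_mulVec, hJ_symm, hJPu, dotProduct_smul, hx,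
      smul_zero]
  · rw [mulVec_mulVec, inv_mul_eq_of_mul_eq_smul_mul hJ_posDef.det_pos.ne'.isUnit hAlam_det
      (by simpa using hn.ne') hJP, one_div, inv_inv, smul_mulVec, mulVec_mulVec]
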